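/- arXiv:math/0510106 — 4 statements merged into one kernel-verified Lean document; each statement's English description precedes it below -/
import Mathlib

section
/- The Laplace operator Δ = ∂/∂x ∂/∂x̄ − Σ_{i=1}^n ∂/∂ξ_i ∂/∂ξ̄_i maps S^k(C^{2|2n}) surjectively onto S^{k−2}(C^{2|2n}) for every k ≥ 2. -/
/-!
The even part `∂²/∂x∂x̄` of `Δ` sends `x^(a+1) x̄^(b+1) ⊗ ω` to `(a+1)(b+1) x^a x̄^b ⊗ ω`, while the
odd part `D = ∑ᵢ ∂/∂ξᵢ ∂/∂ξ̄ᵢ` lowers the odd degree of `ω` by two. Hence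
`x^a x̄^b ⊗ ω = ((a+1)(b+1))⁻¹ • (Δ (x^(a+1) x̄^(b+1) ⊗ ω) + x^(a+1) x̄^(b+1) ⊗ Dω)`,
and induction on the odd degree of `ω` puts every monomial of degree `k - 2` in `Δ(Sᵏ)`.
-/

open scoped TensorProduct

noncomputable section

/-- The exterior algebra on the `2n` odd variables `ξ₁,…,ξₙ,ξ̄₁,…,ξ̄ₙ`
(`ξᵢ` corresponds to basis index `i-1`, `ξ̄ᵢ` to index `n+i-1`). -/
abbrev ExtA (n : ℕ) := ExteriorAlgebra ℂ (Fin (2 * n) → ℂ)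

/-- The supercommutative algebra `ℂ[x, x̄, ξᵢ, ξ̄ᵢ] = ℂ[x,x̄] ⊗ Λ(ξᵢ, ξ̄ᵢ)`,
identified with `S(ℂ^{2|2n})`.  `x` is `X 0`, `x̄` is `X 1`. -/
abbrev SAlg (n : ℕ) := TensorProduct ℂ (MvPolynomial (Fin 2) ℂ) (ExtA n)

/-- The odd generator with index `i`. -/
def xiV (n : ℕ) (i : Fin (2 * n)) : ExtA n := ExteriorAlgebra.ι ℂ (Pi.single i 1)

/-- The odd (left) partial derivative with respect to the `i`-th odd variable,
realized as left contraction in the exterior algebra. -/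
def oddD (n : ℕ) (i : Fin (2 * n)) : ExtA n →ₗ[ℂ] ExtA n :=
  CliffordAlgebra.contractLeft (LinearMap.proj i)

/-- `∂/∂x ∂/∂x̄` on the even (polynomial) part. -/
def evenD2 : MvPolynomial (Fin 2) ℂ →ₗ[ℂ] MvPolynomial (Fin 2) ℂ :=
  (MvPolynomial.pderiv (0 : Fin 2)).toLinearMap ∘ₗ (MvPolynomial.pderiv (1 : Fin 2)).toLinearMap

/-- The Laplace operator `Δ = ∂/∂x ∂/∂x̄ − Σᵢ ∂/∂ξᵢ ∂/∂ξ̄ᵢ`. -/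
def Lap (n : ℕ) : SAlg n →ₗ[ℂ] SAlg n :=
  TensorProduct.map evenD2 LinearMap.id -
    ∑ i : Fin n, TensorProduct.map LinearMap.id
      (oddD n ⟨i, by omega⟩ ∘ₗ oddD n ⟨n + i, by omega⟩)

/-- The degree-`k` graded component `S^k(ℂ^{2|2n})`: the span of the monomials
`x^a x̄^b ξ_{i₁} ⋯ ξ_{i_j}` of total degree `a + b + j = k`. -/
def Sk (n k : ℕ) : Submodule ℂ (SAlg n) :=
  Submodule.span ℂ {z | ∃ (a b : ℕ) (l : List (Fin (2 * n))), a + b + l.length = k ∧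
    z = (MvPolynomial.X 0 ^ a * MvPolynomial.X 1 ^ b) ⊗ₜ[ℂ] (l.map (xiV n)).prod}

namespace ExteriorAlgebra

open CliffordAlgebra

variable {R M κ : Type*} [CommRing R] [AddCommGroup M] [Module R M] (v : κ → M)

def spanProd (j : ℕ) : Submodule R (ExteriorAlgebra R M) :=
  Submodule.span R {z | ∃ l : List κ, l.length = j ∧ z = (l.map fun i => ι R (v i)).prod}

theorem list_prod_mem_spanProd (l : List κ) :
    (l.map fun i => ι R (v i)).prod ∈ spanProd v l.length :=
  Submodule.subset_span ⟨l, rfl, rfl⟩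

theorem ι_mul_mem_spanProd (i : κ) {j : ℕ} {z : ExteriorAlgebra R M} (hz : z ∈ spanProd v j) :
    ι R (v i) * z ∈ spanProd v (j + 1) := by
  induction hz using Submodule.span_induction with
  | mem z hz =>
    obtain ⟨l, rfl, rfl⟩ := hz
    exact list_prod_mem_spanProd v (i :: l)
  | zero => simp
  | add x y _ _ hx hy => rw [mul_add]; exact add_mem hx hy
  | smul c x _ hx => rw [mul_smul_comm]; exact Submodule.smul_mem _ _ hx

theorem contractLeft_list_prod_mem_spanProd (d : Module.Dual R M) :
    ∀ {j : ℕ} (l : List κ), l.length = j + 1 →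
      contractLeft d (l.map fun i => ι R (v i)).prod ∈ spanProd v j
  | _, [], h => absurd h (by simp)
  | 0, [i], _ => by
    simpa [contractLeft_ι, Algebra.algebraMap_eq_smul_one] using
      Submodule.smul_mem _ (d (v i)) (list_prod_mem_spanProd v [])
  | 0, _ :: _ :: _, h => absurd h (by simp)
  | j + 1, i :: l, h => by
    have hl : l.length = j + 1 := by simpa using h
    rw [List.map_cons, List.prod_cons, contractLeft_ι_mul]
    refine sub_mem (Submodule.smul_mem _ _ (hl ▸ list_prod_mem_spanProd v l)) ?_
    exact ι_mul_mem_spanProd v i (contractLeft_list_prod_mem_spanProd d l hl)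

theorem contractLeft_mem_spanProd (d : Module.Dual R M) {j : ℕ} {z : ExteriorAlgebra R M}
    (hz : z ∈ spanProd v (j + 1)) : contractLeft d z ∈ spanProd v j := by
  induction hz using Submodule.span_induction with
  | mem z hz =>
    obtain ⟨l, hl, rfl⟩ := hz
    exact contractLeft_list_prod_mem_spanProd v d l hl
  | zero => simp
  | add x y _ _ hx hy => rw [map_add]; exact add_mem hx hy
  | smul c x _ hx => rw [map_smul]; exact Submodule.smul_mem _ _ hx

theorem contractLeft_eq_zero_of_mem_spanProd_zero (d : Module.Dual R M)
    {z : ExteriorAlgebra R M} (hz : z ∈ spanProd v 0) : contractLeft d z = 0 := by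
  induction hz using Submodule.span_induction with
  | mem z hz =>
    obtain ⟨l, hl, rfl⟩ := hz
    simp [List.length_eq_zero_iff.mp hl, contractLeft_one]
  | zero => simp
  | add x y _ _ hx hy => rw [map_add, hx, hy, add_zero]
  | smul c x _ hx => rw [map_smul, hx, smul_zero]

end ExteriorAlgebra

open ExteriorAlgebra MvPolynomial

abbrev xiSpan (n j : ℕ) : Submodule ℂ (ExtA n) :=
  spanProd (fun i : Fin (2 * n) => (Pi.single i 1 : Fin (2 * n) → ℂ)) j

def oddLap (n : ℕ) : ExtA n →ₗ[ℂ] ExtA n :=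
  ∑ i : Fin n, oddD n ⟨i, by omega⟩ ∘ₗ oddD n ⟨n + i, by omega⟩

theorem oddLap_mem_xiSpan (n : ℕ) {j : ℕ} {z : ExtA n} (hz : z ∈ xiSpan n (j + 2)) :
    oddLap n z ∈ xiSpan n j := by
  rw [oddLap, LinearMap.sum_apply]
  exact Submodule.sum_mem _ fun _ _ =>
    contractLeft_mem_spanProd _ _ (contractLeft_mem_spanProd _ _ hz)

theorem oddLap_eq_zero (n : ℕ) {j : ℕ} (hj : j ≤ 1) {z : ExtA n} (hz : z ∈ xiSpan n j) :
    oddLap n z = 0 := by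
  rw [oddLap, LinearMap.sum_apply]
  refine Finset.sum_eq_zero fun i _ => ?_
  have hz' : oddD n ⟨n + i, by omega⟩ z ∈ xiSpan n 0 := by
    interval_cases j
    · rw [oddD, contractLeft_eq_zero_of_mem_spanProd_zero _ _ hz]; exact zero_mem _
    · exact contractLeft_mem_spanProd _ _ hz
  exact contractLeft_eq_zero_of_mem_spanProd_zero _ _ hz'

theorem monomial_tmul_mem_Sk (n : ℕ) {a b j m : ℕ} (h : a + b + j = m) {z : ExtA n}
    (hz : z ∈ xiSpan n j) : (X 0 ^ a * X 1 ^ b : MvPolynomial (Fin 2) ℂ) ⊗ₜ[ℂ] z ∈ Sk n m := by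
  induction hz using Submodule.span_induction with
  | mem z hz =>
    obtain ⟨l, rfl, rfl⟩ := hz
    exact Submodule.subset_span ⟨a, b, l, h, rfl⟩
  | zero => rw [TensorProduct.tmul_zero]; exact zero_mem _
  | add x y _ _ hx hy => rw [TensorProduct.tmul_add]; exact add_mem hx hy
  | smul c x _ hx => rw [TensorProduct.tmul_smul]; exact Submodule.smul_mem _ _ hx

theorem evenD2_monomial (a b : ℕ) :
    evenD2 (X 0 ^ a * X 1 ^ b : MvPolynomial (Fin 2) ℂ) =
      ((a * b : ℕ) : ℂ) • (X 0 ^ (a - 1) * X 1 ^ (b - 1)) := by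
  change pderiv 0 (pderiv 1 _) = _
  simp [smul_eq_C_mul]
  ring

theorem Lap_tmul (n : ℕ) (p : MvPolynomial (Fin 2) ℂ) (z : ExtA n) :
    Lap n (p ⊗ₜ[ℂ] z) = evenD2 p ⊗ₜ[ℂ] z - p ⊗ₜ[ℂ] oddLap n z := by
  simp only [Lap, oddLap, LinearMap.sub_apply, LinearMap.sum_apply, TensorProduct.map_tmul,
    LinearMap.id_coe, id_eq, TensorProduct.tmul_sum]

theorem Lap_monomial_tmul_mem_Sk (n : ℕ) {a b j k : ℕ} (h : a + b + j = k) {z : ExtA n}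
    (hz : z ∈ xiSpan n j) :
    Lap n ((X 0 ^ a * X 1 ^ b : MvPolynomial (Fin 2) ℂ) ⊗ₜ[ℂ] z) ∈ Sk n (k - 2) := by
  rw [Lap_tmul, evenD2_monomial, ← TensorProduct.smul_tmul']
  refine sub_mem ?_ ?_
  · rcases Nat.eq_zero_or_pos (a * b) with hab | hab
    · rw [hab, Nat.cast_zero, zero_smul]; exact zero_mem _
    · have := Nat.pos_of_mul_pos_right hab
      have := Nat.pos_of_mul_pos_left hab
      exact Submodule.smul_mem _ _ (monomial_tmul_mem_Sk n (by omega) hz)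
  · rcases Nat.lt_or_ge j 2 with hj | hj
    · rw [oddLap_eq_zero n (by omega) hz, TensorProduct.tmul_zero]; exact zero_mem _
    · obtain ⟨j, rfl⟩ := Nat.exists_eq_add_of_le' hj
      exact monomial_tmul_mem_Sk n (by omega) (oddLap_mem_xiSpan n hz)

theorem map_Lap_Sk_le (n k : ℕ) : (Sk n k).map (Lap n) ≤ Sk n (k - 2) := by
  rw [Sk, Submodule.map_span, Submodule.span_le]
  rintro _ ⟨_, ⟨a, b, l, h, rfl⟩, rfl⟩
  exact Lap_monomial_tmul_mem_Sk n h (list_prod_mem_spanProd _ l)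

theorem monomial_tmul_mem_map_Lap_Sk (n : ℕ) {a b j k : ℕ} (h : a + b + j + 2 = k)
    {z : ExtA n} (hz : z ∈ xiSpan n j) :
    (X 0 ^ a * X 1 ^ b : MvPolynomial (Fin 2) ℂ) ⊗ₜ[ℂ] z ∈ (Sk n k).map (Lap n) := by
  induction j using Nat.strong_induction_on generalizing a b z with
  | _ j ih =>
    set p : MvPolynomial (Fin 2) ℂ := X 0 ^ a * X 1 ^ b
    set q : MvPolynomial (Fin 2) ℂ := X 0 ^ (a + 1) * X 1 ^ (b + 1)
    set c : ℂ := (((a + 1) * (b + 1) : ℕ) : ℂ)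
    have hc : c ≠ 0 := Nat.cast_ne_zero.mpr (by positivity)
    have hLap : Lap n (q ⊗ₜ[ℂ] z) = c • p ⊗ₜ[ℂ] z - q ⊗ₜ[ℂ] oddLap n z := by
      rw [Lap_tmul, evenD2_monomial, TensorProduct.smul_tmul', Nat.add_sub_cancel,
        Nat.add_sub_cancel]
    have hq : Lap n (q ⊗ₜ[ℂ] z) ∈ (Sk n k).map (Lap n) :=
      Submodule.mem_map_of_mem (monomial_tmul_mem_Sk n (by omega) hz)
    have hqD : q ⊗ₜ[ℂ] oddLap n z ∈ (Sk n k).map (Lap n) := by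
      rcases Nat.lt_or_ge j 2 with hj | hj
      · rw [oddLap_eq_zero n (by omega) hz, TensorProduct.tmul_zero]; exact zero_mem _
      · obtain ⟨j, rfl⟩ := Nat.exists_eq_add_of_le' hj
        exact ih j (by omega) (by omega) (oddLap_mem_xiSpan n hz)
    have hp : p ⊗ₜ[ℂ] z = c⁻¹ • (Lap n (q ⊗ₜ[ℂ] z) + q ⊗ₜ[ℂ] oddLap n z) := by
      rw [hLap, sub_add_cancel, inv_smul_smul₀ hc]
    rw [hp]
    exact Submodule.smul_mem _ _ (add_mem hq hqD)

/-- the Laplace operator `Δ = ∂/∂x ∂/∂x̄ − Σᵢ ∂/∂ξᵢ ∂/∂ξ̄ᵢ` maps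
`S^k(ℂ^{2|2n})` surjectively onto `S^{k−2}(ℂ^{2|2n})` for every `k ≥ 2`. -/
theorem Lap_surjective (n k : ℕ) (hk : 2 ≤ k) :
    Submodule.map (Lap n) (Sk n k) = Sk n (k - 2) := by
  refine le_antisymm (map_Lap_Sk_le n k) ?_
  rw [Sk, Submodule.span_le]
  rintro _ ⟨a, b, l, h, rfl⟩
  exact monomial_tmul_mem_map_Lap_Sk n (by omega) (list_prod_mem_spanProd _ l)
end
end

section
/- For every atypical λ ∈ X_+^{1|n}, the duality identity β − w_0 λ = (β − w_0 λ^L)^L holds, where L denotes the operator f ↦ f^L on atypical elements of Y_+^{1|n} (transported to weights via the bijection λ ↦ f_λ), β = 2n·ε, and w_0 the longest Weyl group element (acting by λ_{−1}ε + Σλ_iδ_i ↦ λ_{−1}ε − Σλ_iδ_i). -/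
/-- `Y₊^{1|n}`: tuples `f = (f₋₁ | f₁,…,fₙ)` with `f₁ < f₂ < … < fₙ < 0`. -/
def Yplus (n : ℕ) : Set (ℤ × (Fin n → ℤ)) :=
  {f | StrictMono f.2 ∧ ∀ i : Fin n, f.2 i < 0}

/-- `f` is atypical if `|f₋₁| = −fᵢ` for some `i`. -/
def Atypical (n : ℕ) (f : ℤ × (Fin n → ℤ)) : Prop :=
  ∃ i : Fin n, |f.1| = -f.2 i

/-- Case (I) of the definition of `f^L`: `f₋₁ = fᵢ < 0` for some `i`. -/
def CaseI (n : ℕ) (f : ℤ × (Fin n → ℤ)) : Prop :=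
  ∃ i : Fin n, f.1 = f.2 i ∧ f.1 < 0

/-- Case (II): `f₋₁ = −fᵢ > 0` and `{f₁,…,fₙ}` does not contain `{−1,−2,…,fᵢ}`. -/
def CaseII (n : ℕ) (f : ℤ × (Fin n → ℤ)) : Prop :=
  ∃ i : Fin n, f.1 = -f.2 i ∧ 0 < f.1 ∧ ¬ Set.Icc (f.2 i) (-1) ⊆ Set.range f.2

/-- Case (III): `f₋₁ = −fᵢ > 0` and `{f₁,…,fₙ} ⊇ {−1,−2,…,fᵢ}`. -/
def CaseIII (n : ℕ) (f : ℤ × (Fin n → ℤ)) : Prop :=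
  ∃ i : Fin n, f.1 = -f.2 i ∧ 0 < f.1 ∧ Set.Icc (f.2 i) (-1) ⊆ Set.range f.2

/-- The relation `g = f^L`, by the three cases of the paper.  In cases (I) and (II)
the new tail is the increasing rearrangement of `f₁,…,f̂ᵢ,…,fₙ` together with the new
entry (`d` resp. `−c`), which is encoded by prescribing its range and strict
monotonicity. -/
def LRel (n : ℕ) (f g : ℤ × (Fin n → ℤ)) : Prop :=
  (∃ (i : Fin n) (d : ℤ), f.1 = f.2 i ∧ f.1 < 0 ∧
      d < f.2 i ∧ d ∉ Set.range f.2 ∧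
      (∀ d' : ℤ, d' < f.2 i → d' ∉ Set.range f.2 → d' ≤ d) ∧
      g.1 = d ∧ Set.range g.2 = insert d (Set.range f.2 \ {f.2 i}) ∧ StrictMono g.2) ∨
  (∃ (i : Fin n) (c : ℤ), f.1 = -f.2 i ∧ 0 < f.1 ∧
      ¬ Set.Icc (f.2 i) (-1) ⊆ Set.range f.2 ∧
      f.2 i < -c ∧ -c ≤ -1 ∧ -c ∉ Set.range f.2 ∧
      (∀ c' : ℤ, f.2 i < -c' → -c' ≤ -1 → -c' ∉ Set.range f.2 → c' ≤ c) ∧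
      g.1 = c ∧ Set.range g.2 = insert (-c) (Set.range f.2 \ {f.2 i}) ∧ StrictMono g.2) ∨
  (∃ i : Fin n, f.1 = -f.2 i ∧ 0 < f.1 ∧ Set.Icc (f.2 i) (-1) ⊆ Set.range f.2 ∧
      g.1 = -f.1 ∧ g.2 = f.2)

/-- for every atypical `λ ∈ X₊^{1|n}` one has
`β − w₀λ = (β − w₀λ^L)^L`.  In the `f`-coordinates `Y₊^{1|n}` (where passing from `λ`
to `β − w₀λ` negates the `(−1)`-st component), this says: if `g = f^L` then
`(−f₋₁ | f₁,…,fₙ) = ((−g₋₁ | g₁,…,gₙ))^L`. -/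
theorem dualdual (n : ℕ) (f g : ℤ × (Fin n → ℤ)) (hf : f ∈ Yplus n)
    (h : LRel n f g) :
    LRel n (-g.1, g.2) (-f.1, f.2) := by
  obtain ⟨hmono, hneg⟩ := hf
  rcases h with ⟨i, d, hfi, hf1, hd1, hd2, hd3, hg1, hg2, hg3⟩ |
    ⟨i, c, hfi, hf1, hsub, hc1, hc2, hc3, hc4, hg1, hg2, hg3⟩ |
    ⟨i, hfi, hf1, hsub, hg1, hg2⟩
  · -- Case I for f ⇒ Case II for (-g₁,g₂)
    have hd : d ∈ Set.range g.2 := by rw [hg2]; exact Set.mem_insert _ _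
    obtain ⟨j, hj⟩ := hd
    have hfid : f.2 i ∉ Set.range g.2 := by
      rw [hg2]
      rintro (h1 | ⟨-, h2⟩)
      · exact absurd h1.symm (ne_of_lt hd1)
      · exact h2 rfl
    have hfilt : f.2 i < 0 := hfi ▸ hf1
    right; left
    refine ⟨j, -f.2 i, ?_, ?_, ?_, ?_, ?_, ?_, ?_, ?_, ?_, hmono⟩
    · simp [hg1, hj]
    · simp only [hg1]; omega
    · intro hcon
      exact hfid (hcon ⟨by rw [hj]; exact le_of_lt hd1, by omega⟩)
    · rw [hj]; omega
    · omega
    · rw [neg_neg]; exact hfid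
    · intro c' h1 h2 h3
      by_contra hlt
      push_neg at hlt
      have hne : -c' ∉ Set.range f.2 := by
        intro hmem
        apply h3
        rw [hg2]
        right
        exact ⟨hmem, by simp; omega⟩
      have := hd3 (-c') (by omega) hne
      rw [hj] at h1; omega
    · simp; omega
    · rw [hg2, hj]
      have hdnot : d ∉ Set.range f.2 \ {f.2 i} := fun hx => hd2 hx.1
      rw [Set.insert_diff_self_of_notMem hdnot, neg_neg]
      show Set.range f.2 = _
      have hm : f.2 i ∈ Set.range f.2 := ⟨i, rfl⟩
      rw [Set.insert_diff_singleton, Set.insert_eq_self.mpr hm]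
  · -- Case II for f ⇒ Case I for (-g₁,g₂)
    have hc : -c ∈ Set.range g.2 := by rw [hg2]; exact Set.mem_insert _ _
    obtain ⟨j, hj⟩ := hc
    have hfid : f.2 i ∉ Set.range g.2 := by
      rw [hg2]
      rintro (h1 | ⟨-, h2⟩)
      · omega
      · exact h2 rfl
    left
    refine ⟨j, f.2 i, ?_, ?_, ?_, hfid, ?_, ?_, ?_, hmono⟩
    · simp [hg1, hj]
    · simp only [hg1]; omega
    · rw [hj]; omega
    · intro d' h1 h2
      rw [hj] at h1
      by_contra hlt
      push_neg at hlt
      have hne : -(-d') ∉ Set.range f.2 := by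
        rw [neg_neg]
        intro hmem
        apply h2
        rw [hg2]
        right
        exact ⟨hmem, by simp; omega⟩
      have := hc4 (-d') (by omega) (by omega) hne
      omega
    · simp; omega
    · rw [hg2, hj]
      have hcnot : -c ∉ Set.range f.2 \ {f.2 i} := fun hx => hc3 hx.1
      rw [Set.insert_diff_self_of_notMem hcnot]
      show Set.range f.2 = _
      have hm : f.2 i ∈ Set.range f.2 := ⟨i, rfl⟩
      rw [Set.insert_diff_singleton, Set.insert_eq_self.mpr hm]
  · -- Case III for f ⇒ Case III for (-g₁,g₂)
    right; right
    refine ⟨i, ?_, ?_, ?_, ?_, hg2.symm⟩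
    · simp [hg1, hg2, hfi]
    · simp only [hg1]; omega
    · rw [hg2]; exact hsub
    · simp [hg1]
end

section
/- Let λ = Σ_{i=1}^n k_i δ_i with each k_i ∈ {0,1}, and suppose there exist i < j with k_i = 0 and k_j = 1. Then for an indeterminate x, the signed Weyl-group sum Σ_{w ∈ W} (−1)^{ℓ(w)} w( e^{λ+ρ_0} ∏_{i=1}^n (1 + x e^{−δ_i}) ) = 0 in the group algebra of the weight lattice over Z[x]. -/
noncomputable section

/-- The Weyl group of `sp(2n)` as signed permutations: a permutation together with a
sign pattern. -/
abbrev Wgrp (n : ℕ) := Equiv.Perm (Fin n) × (Fin n → Bool)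

/-- Action of a signed permutation on the weight lattice `ℤδ₁ ⊕ … ⊕ ℤδₙ`. -/
def wAct (n : ℕ) (w : Wgrp n) (mu : Fin n → ℤ) : Fin n → ℤ :=
  fun i => if w.2 i then -(mu (w.1⁻¹ i)) else mu (w.1⁻¹ i)

/-- `(−1)^{ℓ(w)}` for a signed permutation: the determinant `sign(σ)·(−1)^{#signs}`. -/
def sgn (n : ℕ) (w : Wgrp n) : ℤ :=
  (Equiv.Perm.sign w.1 : ℤ) * (-1) ^ (Finset.univ.filter (fun i => w.2 i = true)).card

/-- `ρ₀ = Σ_{i=1}^n (n−i+1) δᵢ` (0-based: `ρ₀ i = n − i`). -/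
def rho0 (n : ℕ) : Fin n → ℤ := fun i => (n : ℤ) - i

/-- `δᵢ` as a lattice vector. -/
def delta (n : ℕ) (i : Fin n) : Fin n → ℤ := Pi.single i 1

/-- The group algebra over `ℤ[x]` of the weight lattice of `sp(2n)`. -/
abbrev GA (n : ℕ) := AddMonoidAlgebra (Polynomial ℤ) (Fin n → ℤ)

/-! Pick adjacent positions `a`, `a + 1` with `k a = 0` and `k (a + 1) = 1`. Then `λ + ρ₀` has equal
`a`-th and `(a + 1)`-th coordinates, so the transposition `s = (a a+1)` fixes
`e^{λ+ρ₀} ∏ᵢ (1 + x e^{−δᵢ})`. The involution `w ↦ w s` of `W` flips the sign `(−1)^{ℓ(w)}` and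
leaves `w(…)` unchanged, so the terms of the sum cancel in pairs. -/

open AddMonoidAlgebra

theorem Nat.exists_not_and_succ_of_lt {p : ℕ → Prop} {i j : ℕ} (hij : i < j) (hi : ¬p i)
    (hj : p j) : ∃ a, i ≤ a ∧ a < j ∧ ¬p a ∧ p (a + 1) := by
  induction j with
  | zero => omega
  | succ j ih =>
    by_cases hpj : p j
    · obtain ⟨a, hia, haj, hpa, hpa'⟩ := ih (by grind) hpj
      exact ⟨a, hia, by omega, hpa, hpa'⟩
    · exact ⟨j, by omega, by omega, hpj, hj⟩

theorem exists_adjacent_zero_one {n : ℕ} {k : Fin n → ℤ} (h01 : ∀ i, k i = 0 ∨ k i = 1)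
    (hij : ∃ i j : Fin n, i < j ∧ k i = 0 ∧ k j = 1) :
    ∃ a b : Fin n, (a : ℕ) + 1 = b ∧ k a = 0 ∧ k b = 1 := by
  obtain ⟨i, j, hlt, hki, hkj⟩ := hij
  obtain ⟨a, -, haj, hka, hkb⟩ :=
    Nat.exists_not_and_succ_of_lt (p := fun m => ∀ h : m < n, k ⟨m, h⟩ = 1) hlt
      (fun h => by simpa [hki] using h i.2) (fun _ => hkj)
  have hb : a + 1 < n := lt_of_le_of_lt haj j.2
  refine ⟨⟨a, Nat.lt_of_succ_lt hb⟩, ⟨a + 1, hb⟩, rfl, ?_, hkb hb⟩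
  exact (h01 _).resolve_right fun h => hka fun _ => h

theorem comp_swap_eq_self {α β : Type*} [DecidableEq α] {f : α → β} {a b : α} (h : f a = f b) :
    f ∘ Equiv.swap a b = f := by
  funext x
  rw [Function.comp_apply, Equiv.swap_apply_def]
  split_ifs <;> simp_all

theorem rho0_add_apply_eq {n : ℕ} {k : Fin n → ℤ} {a b : Fin n} (hab : (a : ℕ) + 1 = b)
    (hka : k a = 0) (hkb : k b = 1) : (k + rho0 n) a = (k + rho0 n) b := by
  simp only [Pi.add_apply, rho0, hka, hkb, ← hab]
  push_cast
  ring

def permRingHom (R : Type*) [Semiring R] {n : ℕ} (σ : Equiv.Perm (Fin n)) :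
    AddMonoidAlgebra R (Fin n → ℤ) →+* AddMonoidAlgebra R (Fin n → ℤ) :=
  mapDomainRingHom R (LinearMap.funLeft ℤ ℤ σ).toAddMonoidHom

theorem permRingHom_single {R : Type*} [Semiring R] {n : ℕ} (σ : Equiv.Perm (Fin n))
    (μ : Fin n → ℤ) (r : R) : permRingHom R σ (single μ r) = single (μ ∘ σ) r :=
  mapDomain_single

theorem coeff_permRingHom {R : Type*} [Semiring R] {n : ℕ} (σ : Equiv.Perm (Fin n))
    (x : AddMonoidAlgebra R (Fin n → ℤ)) :
    (permRingHom R σ x).coeff = x.coeff.mapDomain (· ∘ σ) :=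
  coeff_mapDomain _ _

theorem permRingHom_prod_one_add_single_neg_delta {R : Type*} [CommSemiring R] {n : ℕ}
    (σ : Equiv.Perm (Fin n)) (r : R) :
    permRingHom R σ (∏ i, (1 + single (-delta n i) r)) = ∏ i, (1 + single (-delta n i) r) := by
  simp only [map_prod, map_add, map_one, permRingHom_single, delta, Pi.neg_comp,
    Pi.single_comp_equiv]
  exact σ.symm.prod_comp fun i => (1 : AddMonoidAlgebra R (Fin n → ℤ)) + single (-Pi.single i 1) r

theorem wAct_mul_perm {n : ℕ} (w : Wgrp n) (σ : Equiv.Perm (Fin n)) :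
    wAct n (w.1 * σ, w.2) = wAct n w ∘ (· ∘ ⇑σ⁻¹) := by
  funext μ i
  simp [wAct, mul_inv_rev]

theorem sgn_mul_perm {n : ℕ} (w : Wgrp n) (σ : Equiv.Perm (Fin n)) :
    sgn n (w.1 * σ, w.2) = Equiv.Perm.sign σ * sgn n w := by
  simp only [sgn, Equiv.Perm.sign_mul, Units.val_mul]
  ring

theorem sum_sgn_smul_mapDomain_wAct_eq_zero {M : Type*} [AddCommGroup M] {n : ℕ}
    (f : (Fin n → ℤ) →₀ M) {a b : Fin n} (hab : a ≠ b)
    (hf : f.mapDomain (· ∘ Equiv.swap a b) = f) :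
    ∑ w : Wgrp n, sgn n w • f.mapDomain (wAct n w) = 0 := by
  refine Finset.sum_ninvolution (fun w => (w.1 * Equiv.swap a b, w.2)) (fun w => ?_)
    (fun w _ => ?_) (fun _ => Finset.mem_univ _) (fun w => by simp)
  · rw [wAct_mul_perm, Equiv.swap_inv, Finsupp.mapDomain_comp, hf, sgn_mul_perm,
      Equiv.Perm.sign_swap hab]
    simp
  · simp [Prod.ext_iff, hab]

/-- if `λ = Σ kᵢδᵢ` with `kᵢ ∈ {0,1}` and `kᵢ = 0, kⱼ = 1` for some
`i < j`, then `Σ_{w∈W} (−1)^{ℓ(w)} w(e^{λ+ρ₀} ∏ᵢ (1 + x e^{−δᵢ})) = 0`. -/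
theorem weyl_sum_eq_zero (n : ℕ) (k : Fin n → ℤ)
    (h01 : ∀ i, k i = 0 ∨ k i = 1)
    (hij : ∃ i j : Fin n, i < j ∧ k i = 0 ∧ k j = 1) :
    ∑ w : Wgrp n, sgn n w •
      Finsupp.mapDomain (wAct n w)
        (AddMonoidAlgebra.coeff ((AddMonoidAlgebra.single (k + rho0 n) 1 : GA n) *
          ∏ i : Fin n,
            (1 + AddMonoidAlgebra.single (-(delta n i)) (Polynomial.X : Polynomial ℤ)))) =
      0 := by
  obtain ⟨a, b, hab, hka, hkb⟩ := exists_adjacent_zero_one h01 hij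
  refine sum_sgn_smul_mapDomain_wAct_eq_zero _ (a := a) (b := b) (fun h => by simp [h] at hab) ?_
  rw [← coeff_permRingHom, map_mul, permRingHom_single,
    comp_swap_eq_self (rho0_add_apply_eq hab hka hkb), permRingHom_prod_one_add_single_neg_delta]
end
end

section
/- Let λ = δ_1 + δ_2 + ... + δ_l with l ≤ n and let x be an indeterminate. Then (1/D_0) Σ_{w∈W} (−1)^{ℓ(w)} w( e^{λ+ρ_0} ∏_{i=1}^n (1 + x e^{−δ_i}) ) = Σ_{j=0}^l x^{l−j} χ_j, where χ_j is the irreducible sp(2n)-character of highest weight δ_1 + ... + δ_j and D_0 = Σ_{w∈W} (−1)^{ℓ(w)} w(e^{ρ_0}). -/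
noncomputable section

/-- The fundamental weight `ω_j = δ₁ + … + δ_j`. -/
def omegaWt (n : ℕ) (j : ℕ) : Fin n → ℤ := fun i => if (i : ℕ) < j then 1 else 0

/-- The Weyl numerator `N_j = Σ_{w∈W} (−1)^{ℓ(w)} e^{w(ω_j+ρ₀)}`, so that
`χ_j = N_j / D₀` by the Weyl character formula. -/
def weylNum (n : ℕ) (j : ℕ) : GA n :=
  ∑ w : Wgrp n, sgn n w •
    (AddMonoidAlgebra.single (wAct n w (omegaWt n j + rho0 n)) 1 : GA n)

/-! Expanding the product gives `e^{λ+ρ₀} ∏ᵢ (1 + x e^{−δᵢ}) = Σ_S x^{|S|} e^{μ_S}` with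
`μ_S = λ + ρ₀ − Σ_{i∈S} δᵢ`, so the left side is `Σ_S x^{|S|} A(μ_S)` for the alternant
`A(μ) = Σ_w (−1)^{ℓ(w)} e^{wμ}`. The alternant vanishes when `μ` is fixed by a reflection, i.e.
when some `μ_k = 0` (sign change) or `μ_k = μ_{k'}` (transposition): pairing `w` with `w s`
cancels the terms. The coordinates of `μ_S` are `n − i + [i < l] − [i ∈ S]` (0-based), and they are
nonzero and pairwise distinct only when `S = {j, …, l − 1}`, where `μ_S = ω_j + ρ₀`. -/

open Finset Polynomial

section

variable {n : ℕ}

theorem AddMonoidAlgebra.mapDomain_finsetSum {R M N ι : Type*} [Semiring R] (f : M → N)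
    (s : Finset ι) (x : ι → AddMonoidAlgebra R M) :
    mapDomain f (∑ i ∈ s, x i) = ∑ i ∈ s, mapDomain f (x i) :=
  map_sum (⟨⟨mapDomain f, mapDomain_zero f⟩, mapDomain_add f⟩ :
    AddMonoidAlgebra R M →+ AddMonoidAlgebra R N) x s

section WeylGroup

def mulSignFlip (w : Wgrp n) (k : Fin n) : Wgrp n :=
  (w.1, Function.update w.2 (w.1 k) (!w.2 (w.1 k)))

def mulSwap (w : Wgrp n) (k k' : Fin n) : Wgrp n := (w.1 * Equiv.swap k k', w.2)

theorem mulSignFlip_involutive (k : Fin n) : Function.Involutive (mulSignFlip · k) := by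
  intro w
  ext i
  · rfl
  · by_cases hi : i = w.1 k <;> simp [mulSignFlip, hi]

theorem mulSwap_involutive (k k' : Fin n) : Function.Involutive (mulSwap · k k') := by
  intro w
  simp [mulSwap, mul_assoc]

theorem wAct_mulSignFlip (w : Wgrp n) (k : Fin n) (μ : Fin n → ℤ) :
    wAct n (mulSignFlip w k) μ = wAct n w (Function.update μ k (-μ k)) := by
  funext i
  by_cases hi : i = w.1 k
  · subst hi
    cases h : w.2 (w.1 k) <;> simp [wAct, mulSignFlip, h]
  · have : w.1.symm i ≠ k := fun h => hi (by rw [← h]; simp)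
    simp [wAct, mulSignFlip, Function.update_of_ne hi, Function.update_of_ne this]

theorem wAct_mulSwap (w : Wgrp n) (k k' : Fin n) (μ : Fin n → ℤ) :
    wAct n (mulSwap w k k') μ = wAct n w (μ ∘ Equiv.swap k k') := by
  funext i
  simp [wAct, mulSwap]

theorem sgn_eq_sign_mul_prod (w : Wgrp n) :
    sgn n w = Equiv.Perm.sign w.1 * ∏ i, cond (w.2 i) (-1) 1 := by
  simp [sgn, Bool.cond_eq_ite, prod_ite]

theorem sgn_mulSignFlip (w : Wgrp n) (k : Fin n) : sgn n (mulSignFlip w k) = -sgn n w := by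
  rw [sgn_eq_sign_mul_prod, sgn_eq_sign_mul_prod]
  simp only [mulSignFlip, Function.apply_update (fun _ (b : Bool) => cond b (-1 : ℤ) 1),
    prod_update_of_mem (mem_univ _), ← mul_prod_erase univ _ (mem_univ (w.1 k)),
    sdiff_singleton_eq_erase]
  cases w.2 (w.1 k) <;> simp

theorem sgn_mulSwap (w : Wgrp n) {k k' : Fin n} (h : k ≠ k') :
    sgn n (mulSwap w k k') = -sgn n w := by
  rw [sgn_eq_sign_mul_prod, sgn_eq_sign_mul_prod]
  simp [mulSwap, Equiv.Perm.sign_swap h]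

theorem sum_sgn_smul_eq_zero_of_involutive {M : Type*} [AddCommGroup M] {F : Wgrp n → M}
    {ι : Wgrp n → Wgrp n} (hι : Function.Involutive ι) (hsgn : ∀ w, sgn n (ι w) = -sgn n w)
    (hF : ∀ w, F (ι w) = F w) : ∑ w, sgn n w • F w = 0 := by
  refine sum_involution (fun w _ => ι w) (fun w _ => by rw [hsgn, hF, neg_smul, add_neg_cancel])
    (fun w _ hw hfix => hw ?_) (fun _ _ => mem_univ _) (fun w _ => hι w)
  have : sgn n w = 0 := by have := hsgn w; rw [hfix] at this; omega
  rw [this, zero_smul]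

end WeylGroup

section AlternatingSum

variable {R : Type*} [Ring R]

variable (R) in
def altSum (μ : Fin n → ℤ) : AddMonoidAlgebra R (Fin n → ℤ) :=
  ∑ w : Wgrp n, sgn n w • AddMonoidAlgebra.single (wAct n w μ) 1

theorem sum_sgn_smul_mapDomain_single (μ : Fin n → ℤ) (c : R) :
    ∑ w : Wgrp n, sgn n w • AddMonoidAlgebra.mapDomain (wAct n w) (AddMonoidAlgebra.single μ c) =
      c • altSum R μ := by
  simp only [altSum, AddMonoidAlgebra.mapDomain_single, smul_sum, smul_comm c,
    AddMonoidAlgebra.smul_single, smul_eq_mul, mul_one]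

theorem altSum_eq_zero_of_apply_eq_zero {μ : Fin n → ℤ} {k : Fin n} (hk : μ k = 0) :
    altSum R μ = 0 :=
  sum_sgn_smul_eq_zero_of_involutive (mulSignFlip_involutive k) (sgn_mulSignFlip · k)
    fun w => by rw [wAct_mulSignFlip, hk, neg_zero, ← hk, Function.update_eq_self]

theorem altSum_eq_zero_of_not_injective {μ : Fin n → ℤ} (hμ : ¬ Function.Injective μ) :
    altSum R μ = 0 := by
  obtain ⟨k, k', hμk, hkk'⟩ : ∃ k k', μ k = μ k' ∧ k ≠ k' := by
    simpa [Function.Injective] using hμ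
  refine sum_sgn_smul_eq_zero_of_involutive (mulSwap_involutive k k') (sgn_mulSwap · hkk')
    fun w => ?_
  have hswap : μ ∘ Equiv.swap k k' = μ := by
    funext i
    rw [Function.comp_apply, Equiv.swap_apply_def]
    split_ifs <;> simp [*]
  rw [wAct_mulSwap, hswap]

end AlternatingSum

section Classification

variable {l : ℕ} {S : Finset (Fin n)}

def muS (n l : ℕ) (S : Finset (Fin n)) : Fin n → ℤ :=
  omegaWt n l + rho0 n - ∑ i ∈ S, delta n i

-- 0-based: the indices of `δ_{j+1}, …, δ_l`
def finIco (n j l : ℕ) : Finset (Fin n) := {i | j ≤ (i : ℕ) ∧ (i : ℕ) < l}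

theorem muS_apply (i : Fin n) :
    muS n l S i = n - i + (if (i : ℕ) < l then 1 else 0) - (if i ∈ S then 1 else 0) := by
  simp only [muS, omegaWt, rho0, delta, Pi.sub_apply, Pi.add_apply, Finset.sum_apply,
    sum_pi_single]
  ring

theorem single_mul_prod_one_add_single (l : ℕ) :
    (AddMonoidAlgebra.single (omegaWt n l + rho0 n) 1 : GA n) *
        ∏ i : Fin n, (1 + AddMonoidAlgebra.single (-delta n i) (X : ℤ[X])) =
      ∑ S : Finset (Fin n), AddMonoidAlgebra.single (muS n l S) ((X : ℤ[X]) ^ #S) := by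
  simp_rw [add_comm (1 : GA n), prod_add, prod_const_one, mul_one, powerset_univ, mul_sum,
    AddMonoidAlgebra.prod_single, prod_const, AddMonoidAlgebra.single_mul_single, one_mul,
    sum_neg_distrib, ← sub_eq_add_neg, muS]

theorem muS_finIco {j : ℕ} (hj : j ≤ l) : muS n l (finIco n j l) = omegaWt n j + rho0 n := by
  funext i
  simp only [muS_apply, finIco, mem_filter, mem_univ, true_and, Pi.add_apply, omegaWt, rho0]
  split_ifs <;> omega

theorem card_finIco (hl : l ≤ n) (j : ℕ) : #(finIco n j l) = l - j := by
  rw [← card_map Fin.valEmbedding, ← Nat.card_Ico]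
  congr 1
  ext m
  simp only [finIco, mem_map, mem_filter, mem_univ, true_and, Fin.valEmbedding_apply, mem_Ico]
  exact ⟨fun ⟨i, hi, him⟩ => him ▸ hi, fun hm => ⟨⟨m, by omega⟩, hm, rfl⟩⟩

theorem mem_of_le_of_injective_muS (hinj : Function.Injective (muS n l S)) {i i' : Fin n}
    (hi : i ∈ S) (hii' : i ≤ i') (hblock : (i : ℕ) < l ↔ (i' : ℕ) < l) : i' ∈ S := by
  suffices h : ∀ k, (i : ℕ) ≤ k → ∀ hk : k < n, ((i : ℕ) < l ↔ k < l) → (⟨k, hk⟩ : Fin n) ∈ S from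
    h i' hii' i'.2 hblock
  intro k hik
  induction k, hik using Nat.le_induction with
  | base => exact fun _ _ => hi
  | succ k hik ih =>
    intro hk hblock
    have hkS : (⟨k, by omega⟩ : Fin n) ∈ S := ih (by omega) (by omega)
    by_contra hk1
    -- `μ_S` takes the same value at `k` and `k + 1`, as both lie on the same side of `l`
    have := @hinj ⟨k, by omega⟩ ⟨k + 1, hk⟩ (by
      simp only [muS_apply, hkS, hk1, if_true, if_false]
      split_ifs <;> push_cast <;> omega)
    simp [Fin.ext_iff] at this

theorem exists_eq_finIco_of_injective_muS (hinj : Function.Injective (muS n l S))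
    (hz : ∀ k, muS n l S k ≠ 0) : ∃ j ≤ l, S = finIco n j l := by
  have hlt : ∀ i ∈ S, (i : ℕ) < l := by
    intro i hi
    by_contra hil
    -- then `S` contains `n - 1`, where `μ_S` vanishes
    have hlast : (⟨n - 1, by omega⟩ : Fin n) ∈ S :=
      mem_of_le_of_injective_muS hinj hi (by rw [Fin.mk_le_mk]; omega) (by simp only; omega)
    apply hz _ (by rw [muS_apply, if_pos hlast, if_neg (by simp only; omega)]; push_cast; omega)
  obtain rfl | hne := S.eq_empty_or_nonempty
  · exact ⟨l, le_rfl, by ext i; simp [finIco]⟩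
  have hmin := hlt _ (min'_mem S hne)
  refine ⟨S.min' hne, hmin.le, ?_⟩
  ext i
  simp only [finIco, mem_filter, mem_univ, true_and, ← Fin.le_def]
  exact ⟨fun hi => ⟨min'_le S i hi, hlt i hi⟩, fun ⟨hji, hil⟩ =>
    mem_of_le_of_injective_muS hinj (min'_mem S hne) hji (by simp [hil, hmin])⟩

end Classification

theorem sum_smul_altSum_muS {l : ℕ} (hl : l ≤ n) :
    ∑ S : Finset (Fin n), (X : ℤ[X]) ^ #S • altSum ℤ[X] (muS n l S) =
      ∑ j ∈ range (l + 1), (X : ℤ[X]) ^ (l - j) • altSum ℤ[X] (omegaWt n j + rho0 n) := by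
  have hvanish : ∀ S ∈ univ, S ∉ (range (l + 1)).image (finIco n · l) →
      (X : ℤ[X]) ^ #S • altSum ℤ[X] (muS n l S) = 0 := by
    intro S _ hS
    by_cases hinj : Function.Injective (muS n l S)
    swap
    · rw [altSum_eq_zero_of_not_injective hinj, smul_zero]
    by_cases hz : ∃ k, muS n l S k = 0
    · obtain ⟨k, hk⟩ := hz
      rw [altSum_eq_zero_of_apply_eq_zero hk, smul_zero]
    obtain ⟨j, hj, rfl⟩ := exists_eq_finIco_of_injective_muS hinj (not_exists.mp hz)
    exact absurd (mem_image_of_mem _ (mem_range.2 (by omega))) hS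
  have hinjOn : Set.InjOn (finIco n · l) (range (l + 1)) := fun j hj j' hj' h => by
    have := congrArg card h
    simp only [card_finIco hl, coe_range, Set.mem_Iio] at this hj hj'
    omega
  rw [← sum_subset (subset_univ _) hvanish, sum_image hinjOn]
  refine sum_congr rfl fun j hj => ?_
  rw [card_finIco hl, muS_finIco (by simpa [Nat.lt_succ_iff] using hj)]

end

/-- for `λ = δ₁ + … + δ_l` (`l ≤ n`),
`(1/D₀) Σ_{w∈W} (−1)^{ℓ(w)} w(e^{λ+ρ₀} ∏ᵢ(1 + x e^{−δᵢ})) = Σ_{j=0}^l x^{l−j} χ_j`,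
stated equivalently (multiplying through by the Weyl denominator `D₀` and using
`χ_j D₀ = N_j`) as an identity in the group algebra over `ℤ[x]`. -/
theorem weyl_sum_eq_chi (n l : ℕ) (hl : l ≤ n) :
    ∑ w : Wgrp n, sgn n w •
      AddMonoidAlgebra.mapDomain (wAct n w)
        ((AddMonoidAlgebra.single (omegaWt n l + rho0 n) 1 : GA n) *
          ∏ i : Fin n,
            (1 + AddMonoidAlgebra.single (-(delta n i)) (Polynomial.X : Polynomial ℤ))) =
      ∑ j ∈ Finset.range (l + 1), (Polynomial.X : Polynomial ℤ) ^ (l - j) • weylNum n j := by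
  rw [single_mul_prod_one_add_single]
  simp_rw [AddMonoidAlgebra.mapDomain_finsetSum, smul_sum]
  rw [sum_comm]
  simp_rw [sum_sgn_smul_mapDomain_single]
  exact sum_smul_altSum_muS hl
end
end
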